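/- arXiv:2106.15260 — 8 statements merged into one kernel-verified Lean document; each statement's English description precedes it below -/
import Mathlib

section
/- Carlitz's identity: for all nonnegative integers m and n, (-1)^m · ∑_{k=0}^m C(m,k) · B_{n+k} = (-1)^n · ∑_{k=0}^n C(n,k) · B_{m+k}. -/
/-!
Write `S a m n = ∑ₖ C(m,k) a(n+k)`. Pascal's rule gives `S a (m+1) n = S a m n + S a m (n+1)`,
so `(-1)^m S a m n` and `(-1)^n S a n m` satisfy the same recursion in `m`, and they agree at
`m = 0` as soon as `S a n 0 = (-1)^n a n`. The Bernoulli numbers have this property, because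
`∑_{k ≤ n} C(n,k) B_k = B'_n = (-1)^n B_n`.
-/

open Finset

section BinomialShiftSum

variable {R : Type*}

def binomialShiftSum [NonAssocSemiring R] (a : ℕ → R) (m n : ℕ) : R :=
  ∑ k ∈ range (m + 1), (m.choose k : R) * a (n + k)

theorem binomialShiftSum_zero_left [NonAssocSemiring R] (a : ℕ → R) (n : ℕ) :
    binomialShiftSum a 0 n = a n := by
  simp [binomialShiftSum]

theorem binomialShiftSum_succ_left [NonAssocSemiring R] (a : ℕ → R) (m n : ℕ) :
    binomialShiftSum a (m + 1) n = binomialShiftSum a m n + binomialShiftSum a m (n + 1) := by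
  simp only [binomialShiftSum, add_right_comm n 1]
  exact sum_choose_succ_mul (fun i _ => a (n + i)) m

theorem neg_one_pow_mul_binomialShiftSum_comm [CommRing R] {a : ℕ → R}
    (ha : ∀ n, binomialShiftSum a n 0 = (-1) ^ n * a n) (m n : ℕ) :
    (-1) ^ m * binomialShiftSum a m n = (-1) ^ n * binomialShiftSum a n m := by
  induction m generalizing n with
  | zero =>
    rw [binomialShiftSum_zero_left, ha, ← mul_assoc, ← pow_add, Even.neg_one_pow ⟨n, rfl⟩]
    ring
  | succ m ih =>
    linear_combination (-1) ^ (m + 1) * binomialShiftSum_succ_left a m n - ih n - ih (n + 1)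
      + (-1) ^ n * binomialShiftSum_succ_left a n m

end BinomialShiftSum

theorem sum_range_succ_choose_mul_bernoulli (n : ℕ) :
    ∑ k ∈ range (n + 1), (n.choose k : ℚ) * bernoulli k = (-1) ^ n * bernoulli n := by
  rw [sum_range_succ, sum_bernoulli, Nat.choose_self, Nat.cast_one, one_mul]
  by_cases hn : n = 1
  · subst hn
    norm_num
  · rw [if_neg hn, zero_add, ← bernoulli'_eq_bernoulli, bernoulli_eq_bernoulli'_of_ne_one hn]

theorem carlitz_identity (m n : ℕ) :
    (-1 : ℚ) ^ m * ∑ k ∈ Finset.range (m + 1), (m.choose k : ℚ) * bernoulli (n + k) =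
      (-1 : ℚ) ^ n * ∑ k ∈ Finset.range (n + 1), (n.choose k : ℚ) * bernoulli (m + k) :=
  neg_one_pow_mul_binomialShiftSum_comm (a := bernoulli)
    (fun n => by simpa only [binomialShiftSum, zero_add] using
      sum_range_succ_choose_mul_bernoulli n) m n
end

section
/- Let K ≥ 2 be an integer. Define the (K-1)×(K-1) matrices P and Q by P_{s,r} = (2/(2s-1)) · ∑_{n=0}^{2K-2s} C(2r-1, 2K-2s-n+1) · C(n+2s-2, n) · B_n and Q_{s,r} = -(2/(2s-1)) · ∑_{n=0}^{2K-2s} C(2K-2r, 2K-2s-n+1) · C(n+2s-2, n) · B_n, for 1 ≤ r, s ≤ K-1. Then P = Q. -/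
/-!
Put `m = 2K - 2s + 1` and `c = 2s - 2`. The two sums are
`S(y) = ∑_{n ≤ m} C(y, m-n) C(n+c, n) B_n` at `y = 2r - 1` and `y = 2K - 2r`, which add up to
`m + c`. Whenever `a + b = m + c`, upper negation gives
`C(b, m-n) = (-1)^(m-n) C(a - (c+n+1), m-n)`, and Chu–Vandermonde expands this in the `C(a, m-j)`.
After exchanging the sums, the inner sum is `∑_n C(j, n) B_n = B_j(1) = (-1)^j B_j`, so
`S(b) = (-1)^m S(a)`. Since `m` is odd, `S(b) = -S(a)`, i.e. `P = Q`; the term `n = m` drops out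
of the sums because `B_m = 0`.
-/

open Finset

theorem Nat.cast_choose_eq_sum_of_add_eq {a b c J : ℕ} (h : a + b = J + c) :
    (b.choose J : ℤ) =
      ∑ k ∈ range (J + 1), (-1) ^ (J + k) * (a.choose (J - k) : ℤ) * (c + k).choose k := by
  have hb : -(b : ℤ) + J - 1 = a + -((c + 1 : ℕ) : ℤ) := by push_cast; omega
  rw [← Ring.choose_natCast, ← neg_neg (b : ℤ), Ring.choose_neg, hb,
    Ring.add_choose_eq J (Commute.all _ _), ← Nat.sum_antidiagonal_swap,
    Nat.sum_antidiagonal_eq_sum_range_succ_mk, smul_sum]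
  refine sum_congr rfl fun k _ => ?_
  have hc : ((c + 1 : ℕ) : ℤ) + k - 1 = ((c + k : ℕ) : ℤ) := by push_cast; ring
  simp only [Prod.swap_prod_mk, Ring.choose_neg, hc, Ring.choose_natCast, Units.smul_def,
    Int.coe_negOnePow_natCast, smul_eq_mul, pow_add]
  ring

theorem Nat.add_add_choose_mul_add_choose (c n k : ℕ) :
    (c + n + k).choose k * (c + n).choose n = (c + (n + k)).choose (n + k) * (n + k).choose n := by
  rw [← Nat.choose_symm_add, ← add_assoc, Nat.choose_mul (Nat.le_add_right n k),
    Nat.choose_mul (Nat.le_add_left n c), show c + n + k - n = c + k by omega,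
    Nat.add_sub_cancel, Nat.add_sub_cancel_left,
    Nat.choose_symm_add]

theorem Nat.cast_choose_mul_add_choose_eq_sum {a b c m n : ℕ} (h : a + b = m + c) (hn : n ≤ m) :
    (b.choose (m - n) * (n + c).choose n : ℤ) =
      ∑ j ∈ range (m + 1),
        (-1) ^ (m + j) * (a.choose (m - j) : ℤ) * (c + j).choose j * j.choose n := by
  rw [Nat.cast_choose_eq_sum_of_add_eq (a := a) (c := c + n) (by omega), sum_mul,
    show m + 1 = n + (m - n + 1) by omega, sum_range_add _ n]
  have hlow : ∀ j ∈ range n,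
      (-1) ^ (m + j) * (a.choose (m - j) : ℤ) * (c + j).choose j * j.choose n = 0 := by
    intro j hj
    rw [Nat.choose_eq_zero_of_lt (mem_range.1 hj), Nat.cast_zero, mul_zero]
  rw [sum_eq_zero hlow, zero_add]
  refine sum_congr rfl fun k _ => ?_
  have hsign : (-1 : ℤ) ^ (m + (n + k)) = (-1) ^ (m - n + k) := by
    rw [show m + (n + k) = m - n + k + 2 * n by omega, pow_add, pow_mul]; norm_num
  rw [hsign, show m - (n + k) = m - n - k by omega, mul_assoc _ ((c + (n + k)).choose _ : ℤ),
    ← Nat.cast_mul, ← Nat.add_add_choose_mul_add_choose, add_comm n c]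
  push_cast
  ring

theorem sum_range_choose_mul_bernoulli {j N : ℕ} (h : j < N) :
    ∑ k ∈ range N, (j.choose k : ℚ) * bernoulli k = bernoulli' j := by
  have hsucc : ∑ k ∈ range (j + 1), (j.choose k : ℚ) * bernoulli k = bernoulli' j := by
    rw [sum_range_succ, sum_bernoulli, Nat.choose_self, Nat.cast_one, one_mul]
    rcases eq_or_ne j 1 with rfl | hj
    · norm_num [bernoulli'_one]
    · rw [if_neg hj, zero_add, bernoulli_eq_bernoulli'_of_ne_one hj]
  rw [← hsucc, eq_comm]
  refine sum_subset (range_subset_range.2 h) fun k _ hk => ?_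
  rw [Nat.choose_eq_zero_of_lt (by simpa using hk), Nat.cast_zero, zero_mul]

theorem sum_choose_mul_add_choose_mul_bernoulli {a b c m : ℕ} (h : a + b = m + c) :
    ∑ n ∈ range (m + 1), (b.choose (m - n) : ℚ) * (n + c).choose n * bernoulli n =
      (-1) ^ m *
        ∑ n ∈ range (m + 1), (a.choose (m - n) : ℚ) * (n + c).choose n * bernoulli n := by
  calc _ = ∑ n ∈ range (m + 1), ∑ j ∈ range (m + 1),
          (-1) ^ (m + j) * (a.choose (m - j) : ℚ) * (c + j).choose j *
            (j.choose n * bernoulli n) := by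
        refine sum_congr rfl fun n hn => ?_
        have hB := congrArg (Int.cast : ℤ → ℚ)
          (Nat.cast_choose_mul_add_choose_eq_sum h (Nat.lt_succ_iff.1 (mem_range.1 hn)))
        push_cast at hB
        rw [hB, sum_mul]
        exact sum_congr rfl fun j _ => by ring
    _ = ∑ j ∈ range (m + 1), (-1) ^ (m + j) * (a.choose (m - j) : ℚ) * (c + j).choose j *
          bernoulli' j := by
        rw [sum_comm]
        refine sum_congr rfl fun j hj => ?_
        rw [← mul_sum, sum_range_choose_mul_bernoulli (mem_range.1 hj)]
    _ = _ := by
        rw [mul_sum]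
        refine sum_congr rfl fun j _ => ?_
        rw [bernoulli, pow_add, add_comm c j]
        ring

theorem sum_range_choose_mul_add_choose_mul_bernoulli_of_odd {a b c m : ℕ} (h : a + b = m + c)
    (hm : Odd m) (hm1 : 1 < m) :
    ∑ n ∈ range m, (b.choose (m - n) : ℚ) * (n + c).choose n * bernoulli n =
      -∑ n ∈ range m, (a.choose (m - n) : ℚ) * (n + c).choose n * bernoulli n := by
  simpa only [sum_range_succ, bernoulli_eq_zero_of_odd hm hm1, mul_zero, add_zero,
    hm.neg_one_pow, neg_one_mul] using sum_choose_mul_add_choose_mul_bernoulli h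

theorem P_eq_Q_general (K : ℕ)
    (P Q : Matrix (Fin (K - 1)) (Fin (K - 1)) ℚ)
    (hP : ∀ s r : Fin (K - 1),
      P s r = (2 / (2 * ((s : ℕ) + 1 : ℚ) - 1)) *
        ∑ n ∈ Finset.range (2 * K - 2 * ((s : ℕ) + 1) + 1),
          ((2 * ((r : ℕ) + 1) - 1).choose (2 * K - 2 * ((s : ℕ) + 1) - n + 1) : ℚ) *
            ((n + 2 * ((s : ℕ) + 1) - 2).choose n : ℚ) * bernoulli n)
    (hQ : ∀ s r : Fin (K - 1),
      Q s r = -(2 / (2 * ((s : ℕ) + 1 : ℚ) - 1)) *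
        ∑ n ∈ Finset.range (2 * K - 2 * ((s : ℕ) + 1) + 1),
          ((2 * K - 2 * ((r : ℕ) + 1)).choose (2 * K - 2 * ((s : ℕ) + 1) - n + 1) : ℚ) *
            ((n + 2 * ((s : ℕ) + 1) - 2).choose n : ℚ) * bernoulli n) :
    P = Q := by
  ext s r
  have hs := s.isLt
  have hr := r.isLt
  set m := 2 * K - 2 * ((s : ℕ) + 1) + 1
  set c := 2 * ((s : ℕ) + 1) - 2
  have hterm : ∀ y : ℕ, ∀ n ∈ range m,
      (y.choose (2 * K - 2 * ((s : ℕ) + 1) - n + 1) : ℚ) *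
          ((n + 2 * ((s : ℕ) + 1) - 2).choose n : ℚ) * bernoulli n =
        y.choose (m - n) * (n + c).choose n * bernoulli n := by
    intro y n hn
    rw [show 2 * K - 2 * ((s : ℕ) + 1) - n + 1 = m - n by have := mem_range.1 hn; omega,
      show n + 2 * ((s : ℕ) + 1) - 2 = n + c by omega]
  rw [hP, hQ, sum_congr rfl (hterm _), sum_congr rfl (hterm _),
    sum_range_choose_mul_add_choose_mul_bernoulli_of_odd (a := 2 * K - 2 * ((r : ℕ) + 1))
      (by omega) ⟨K - ((s : ℕ) + 1), by omega⟩ (by omega)]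
  ring

theorem P_eq_Q (K : ℕ) (hK : 2 ≤ K)
    (P Q : Matrix (Fin (K - 1)) (Fin (K - 1)) ℚ)
    (hP : ∀ s r : Fin (K - 1),
      P s r = (2 / (2 * ((s : ℕ) + 1 : ℚ) - 1)) *
        ∑ n ∈ Finset.range (2 * K - 2 * ((s : ℕ) + 1) + 1),
          ((2 * ((r : ℕ) + 1) - 1).choose (2 * K - 2 * ((s : ℕ) + 1) - n + 1) : ℚ) *
            ((n + 2 * ((s : ℕ) + 1) - 2).choose n : ℚ) * bernoulli n)
    (hQ : ∀ s r : Fin (K - 1),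
      Q s r = -(2 / (2 * ((s : ℕ) + 1 : ℚ) - 1)) *
        ∑ n ∈ Finset.range (2 * K - 2 * ((s : ℕ) + 1) + 1),
          ((2 * K - 2 * ((r : ℕ) + 1)).choose (2 * K - 2 * ((s : ℕ) + 1) - n + 1) : ℚ) *
            ((n + 2 * ((s : ℕ) + 1) - 2).choose n : ℚ) * bernoulli n) :
    P = Q :=
  P_eq_Q_general K P Q hP hQ
end

section
/- Let K ≥ 2 and let 1 ≤ s ≤ s' ≤ K-1 with s ≤ s'. With B_{r,s'} = C(2K-2s', 2r-1) and P_{s,r} = (2/(2s-1)) ∑_{n=0}^{2K-2s} C(2r-1, 2K-2s-n+1) C(n+2s-2, n) B_n, one has (PB)_{s,s'} = ∑_{r=1}^{K-1} P_{s,r} B_{r,s'} = (2/(2s-1)) ∑_{n=2s'-2s+2}^{2K-2s} C(2K-2s', 2s-2s'+n-1) · C(n+2s-2, n) · 2^{2s-2s'+n-2} · B_n. -/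
/-!
After exchanging the two sums, the coefficient of `B_n` is `∑_r C(2r-1, j) C(M, 2r-1)` with
`j = 2K-2s-n+1` and `M = 2K-2s'`. Trinomial revision `C(i, j) C(M, i) = C(M, j) C(M-j, i-j)` turns
this sum over odd `i` into `C(M, j)` times a sum of alternate binomial coefficients of row
`M - j`, which is half the row sum, `2^(M-j-1)`, when `j < M`. When `j ≥ M` it vanishes, as `M` is
even and so no odd `i` satisfies `j ≤ i ≤ M`. The identity thus holds for any sequence in place
of `B_n`.
-/

open Finset

theorem Finset.sum_range_two_mul {M : Type*} [AddCommMonoid M] (f : ℕ → M) (L : ℕ) :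
    ∑ i ∈ range (2 * L), f i = ∑ t ∈ range L, (f (2 * t) + f (2 * t + 1)) := by
  induction L with
  | zero => simp
  | succ L ih => rw [mul_add_one, sum_range_succ, sum_range_succ, sum_range_succ, ih, add_assoc]

theorem Nat.sum_range_choose_of_lt {n m : ℕ} (h : n < m) :
    ∑ i ∈ range m, n.choose i = 2 ^ n := by
  obtain ⟨k, rfl⟩ := Nat.exists_eq_add_of_le h
  rw [sum_range_add, Nat.sum_range_choose,
    sum_eq_zero fun i _ ↦ Nat.choose_eq_zero_of_lt (by omega), add_zero]

theorem Nat.sum_range_choose_two_mul_add_one {N L : ℕ} (hN : 0 < N) (hNL : N ≤ 2 * L) :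
    ∑ t ∈ range L, N.choose (2 * t + 1) = 2 ^ (N - 1) := by
  obtain ⟨n, rfl⟩ := Nat.exists_eq_add_of_lt hN
  simp only [zero_add, Nat.choose_succ_succ', add_tsub_cancel_right]
  rw [← sum_range_two_mul, Nat.sum_range_choose_of_lt (by omega)]

theorem Nat.sum_range_choose_two_mul {N L : ℕ} (hN : 0 < N) (hNL : N < 2 * L) :
    ∑ t ∈ range L, N.choose (2 * t) = 2 ^ (N - 1) := by
  have hsplit := sum_range_two_mul N.choose L
  rw [Nat.sum_range_choose_of_lt hNL, sum_add_distrib,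
    Nat.sum_range_choose_two_mul_add_one hN hNL.le] at hsplit
  have : 2 ^ N = 2 * 2 ^ (N - 1) := by rw [← pow_succ']; congr; omega
  omega

theorem Nat.sum_range_choose_odd_mul_choose {M j L : ℕ} (hj : j < M) (hM : M ≤ 2 * L) :
    ∑ t ∈ range L, (2 * t + 1).choose j * M.choose (2 * t + 1) =
      M.choose j * 2 ^ (M - j - 1) := by
  obtain ⟨a, b, rfl, hj_eq⟩ : ∃ a b, L = a + b ∧ (j = 2 * a ∨ j = 2 * a + 1) := by
    obtain ⟨a, h | h⟩ := Nat.even_or_odd' j <;> exact ⟨a, L - a, by omega, by omega⟩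
  have hlow : ∑ t ∈ range a, (2 * t + 1).choose j * M.choose (2 * t + 1) = 0 :=
    sum_eq_zero fun t ht ↦ by
      rw [Nat.choose_eq_zero_of_lt (by simp only [mem_range] at ht; omega), zero_mul]
  have hhigh (u : ℕ) : (2 * (a + u) + 1).choose j * M.choose (2 * (a + u) + 1) =
      M.choose j * (M - j).choose (2 * (a + u) + 1 - j) := by
    rw [mul_comm, Nat.choose_mul (by omega)]
  rw [sum_range_add, hlow, zero_add, sum_congr rfl fun u _ ↦ hhigh u, ← mul_sum]
  congr 1
  rcases hj_eq with rfl | rfl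
  · simp_rw [show ∀ u, 2 * (a + u) + 1 - 2 * a = 2 * u + 1 by omega]
    exact Nat.sum_range_choose_two_mul_add_one (by omega) (by omega)
  · simp_rw [show ∀ u, 2 * (a + u) + 1 - (2 * a + 1) = 2 * u by omega]
    exact Nat.sum_range_choose_two_mul (by omega) (by omega)

theorem Nat.sum_range_choose_odd_mul_choose_of_even {M j L : ℕ} (hM : Even M)
    (hML : M ≤ 2 * L) :
    ∑ t ∈ range L, (2 * t + 1).choose j * M.choose (2 * t + 1) =
      if j < M then M.choose j * 2 ^ (M - j - 1) else 0 := by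
  split_ifs with hj
  · exact Nat.sum_range_choose_odd_mul_choose hj hML
  · refine sum_eq_zero fun t _ ↦ ?_
    obtain ⟨c, rfl⟩ := hM
    rcases lt_or_ge (2 * t + 1) j with h | h
    · rw [Nat.choose_eq_zero_of_lt h, zero_mul]
    · rw [Nat.choose_eq_zero_of_lt (n := c + c) (by omega), mul_zero]

theorem Finset.sum_Icc_one_two_mul_sub_one {M : Type*} [AddCommMonoid M] (f : ℕ → M) (L : ℕ) :
    ∑ r ∈ Icc 1 L, f (2 * r - 1) = ∑ t ∈ range L, f (2 * t + 1) := by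
  rw [← Finset.Ico_add_one_right_eq_Icc, sum_Ico_eq_sum_range, Nat.add_sub_cancel]
  exact sum_congr rfl fun t _ ↦ by congr 1; omega

theorem PB_le_general (K s s' : ℕ) (hs : 1 ≤ s) (hss' : s ≤ s') :
    ∑ r ∈ Finset.Icc 1 (K - 1),
        ((2 / (2 * (s : ℚ) - 1)) *
            ∑ n ∈ Finset.range (2 * K - 2 * s + 1),
              ((2 * r - 1).choose (2 * K - 2 * s - n + 1) : ℚ) *
                ((n + 2 * s - 2).choose n : ℚ) * bernoulli n) *
          ((2 * K - 2 * s').choose (2 * r - 1) : ℚ) =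
      (2 / (2 * (s : ℚ) - 1)) *
        ∑ n ∈ Finset.Icc (2 * s' - 2 * s + 2) (2 * K - 2 * s),
          ((2 * K - 2 * s').choose (2 * s + n - 2 * s' - 1) : ℚ) *
            ((n + 2 * s - 2).choose n : ℚ) * 2 ^ (2 * s + n - 2 * s' - 2) * bernoulli n := by
  set M := 2 * K - 2 * s'
  have hB (j : ℕ) :
      ∑ r ∈ Icc 1 (K - 1), ((2 * r - 1).choose j : ℚ) * (M.choose (2 * r - 1) : ℚ) =
        if j < M then (M.choose j : ℚ) * 2 ^ (M - j - 1) else 0 := by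
    rw [sum_Icc_one_two_mul_sub_one (fun i ↦ (i.choose j : ℚ) * (M.choose i : ℚ))]
    exact_mod_cast Nat.sum_range_choose_odd_mul_choose_of_even ⟨K - s', by omega⟩ (by omega)
  calc _ = (2 / (2 * (s : ℚ) - 1)) * ∑ n ∈ range (2 * K - 2 * s + 1),
        (∑ r ∈ Icc 1 (K - 1), ((2 * r - 1).choose (2 * K - 2 * s - n + 1) : ℚ) *
          (M.choose (2 * r - 1) : ℚ)) * (((n + 2 * s - 2).choose n : ℚ) * bernoulli n) := by
        simp only [mul_sum, sum_mul]
        rw [sum_comm]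
        exact sum_congr rfl fun n _ ↦ sum_congr rfl fun r _ ↦ by ring
    _ = _ := by
      simp only [hB, ite_mul, zero_mul, ← sum_filter]
      congr 1
      refine sum_congr (by ext n; simp only [mem_filter, mem_range, mem_Icc]; omega) fun n hn ↦ ?_
      simp only [mem_Icc] at hn
      rw [Nat.choose_symm_of_eq_add (by omega : M = _ + (2 * s + n - 2 * s' - 1)),
        show M - (2 * K - 2 * s - n + 1) - 1 = 2 * s + n - 2 * s' - 2 by omega]
      ring

theorem PB_le (K s s' : ℕ) (hK : 2 ≤ K) (hs : 1 ≤ s) (hss' : s ≤ s') (hs' : s' ≤ K - 1) :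
    ∑ r ∈ Finset.Icc 1 (K - 1),
        ((2 / (2 * (s : ℚ) - 1)) *
            ∑ n ∈ Finset.range (2 * K - 2 * s + 1),
              ((2 * r - 1).choose (2 * K - 2 * s - n + 1) : ℚ) *
                ((n + 2 * s - 2).choose n : ℚ) * bernoulli n) *
          ((2 * K - 2 * s').choose (2 * r - 1) : ℚ) =
      (2 / (2 * (s : ℚ) - 1)) *
        ∑ n ∈ Finset.Icc (2 * s' - 2 * s + 2) (2 * K - 2 * s),
          ((2 * K - 2 * s').choose (2 * s + n - 2 * s' - 1) : ℚ) *
            ((n + 2 * s - 2).choose n : ℚ) * 2 ^ (2 * s + n - 2 * s' - 2) * bernoulli n :=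
  PB_le_general K s s' hs hss'
end

section
/- Let K ≥ 2 and let s be a positive integer with s ≤ K-1. With C_{r,s} = C(2K-2s, 2K-2r) and P defined by P_{s,r} = -(2/(2s-1)) ∑_{n=0}^{2K-2s} C(2K-2r, 2K-2s-n+1) C(n+2s-2, n) B_n, the diagonal entry satisfies (PC)_{s,s} = 1 - (2/(2s-1)) · ∑_{n=2}^{2K-2s} C(2K-2s, n-1) · C(n+2s-2, n) · 2^{n-2} · B_n. -/
/-!
Swapping the sums over `r` and `n` reduces everything to the integers
`T n = ∑ r, C(2K-2r, M-n+1) C(M, 2K-2r)` with `M = 2K - 2s`. As `r` runs over `1, …, K-1`,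
`e = 2K - 2r` runs over the even numbers in `[2, M]` that matter, and
`C(M, e) C(e, m) = C(M, m) C(M-m, e-m)` turns `T n` into `C(M, m)` times a sum of the binomial
coefficients `C(n-1, i)` of one parity, which is `2^(n-2)` because the alternating sum vanishes.
So `T 0 = 0`, `T 1 = 1` (only `e = M` contributes, `M` being even) and
`T n = C(M, n-1) 2^(n-2)` for `n ≥ 2`; the `n = 1` term `C(2s-1, 1) B₁ T 1 = -(2s-1)/2`
yields the `1`.
-/

open Finset

theorem sum_range_filter_even_add_choose (m : ℕ) {d : ℕ} (hd : d ≠ 0) :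
    ∑ i ∈ range (d + 1) with Even (m + i), d.choose i = 2 ^ (d - 1) := by
  have hterm : ∀ i, 2 * (if Even (m + i) then (d.choose i : ℤ) else 0) =
      d.choose i + (-1) ^ m * ((-1) ^ i * d.choose i) := by
    intro i
    rw [← mul_assoc, ← pow_add]
    split_ifs with h
    · rw [h.neg_one_pow]; ring
    · rw [(Nat.not_even_iff_odd.mp h).neg_one_pow]; ring
  have htwice :
      2 * ∑ i ∈ range (d + 1) with Even (m + i), (d.choose i : ℤ) = 2 * 2 ^ (d - 1) := by
    rw [sum_filter, mul_sum, sum_congr rfl fun i _ => hterm i, sum_add_distrib, ← mul_sum,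
      Int.alternating_sum_range_choose_of_ne hd, mul_zero, add_zero, ← pow_succ',
      Nat.sub_add_cancel (Nat.one_le_iff_ne_zero.mpr hd)]
    exact_mod_cast Nat.sum_range_choose d
  exact_mod_cast mul_left_cancel₀ two_ne_zero htwice

theorem sum_range_filter_even_choose_mul_choose {M m : ℕ} (hm : m ≤ M) :
    ∑ e ∈ range (M + 1) with Even e, M.choose e * e.choose m =
      M.choose m * ∑ i ∈ range (M - m + 1) with Even (m + i), (M - m).choose i := by
  rw [sum_filter, sum_filter, mul_sum, show M + 1 = m + (M - m + 1) by omega, sum_range_add,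
    sum_eq_zero fun e he => by simp [Nat.choose_eq_zero_of_lt (mem_range.mp he)], zero_add]
  refine sum_congr rfl fun i _ => ?_
  rw [Nat.choose_mul (Nat.le_add_right m i), Nat.add_sub_cancel_left]
  split_ifs <;> simp

theorem sum_Icc_two_mul_sub_eq_sum_filter_even {R : Type*} [AddCommMonoid R] (f : ℕ → R)
    {K M : ℕ} (hM : M < 2 * K) (hf0 : f 0 = 0) (hf : ∀ e, M < e → f e = 0) :
    ∑ r ∈ Icc 1 (K - 1), f (2 * K - 2 * r) = ∑ e ∈ range (M + 1) with Even e, f e := by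
  refine sum_bij_ne_zero (fun r _ _ => 2 * K - 2 * r) ?_ ?_ ?_ (fun _ _ _ => rfl)
  · intro r hr hfr
    have : 2 * K - 2 * r ≤ M := by
      by_contra h
      exact hfr (hf _ (by omega))
    simp only [mem_filter, mem_range, mem_Icc] at hr ⊢
    exact ⟨by omega, ⟨K - r, by omega⟩⟩
  · intro r₁ hr₁ _ r₂ hr₂ _ h
    simp only [mem_Icc] at hr₁ hr₂
    omega
  · intro e he hfe
    obtain ⟨he, t, rfl⟩ := mem_filter.mp he
    have ht : t ≠ 0 := by rintro rfl; exact hfe hf0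
    have htM : t + t ≤ M := Nat.lt_succ_iff.mp (mem_range.mp he)
    refine ⟨K - t, mem_Icc.mpr ⟨by omega, by omega⟩, ?_, by omega⟩
    convert hfe using 2
    omega

section

variable {K M : ℕ}

theorem sum_Icc_choose_mul_choose_two_mul_sub (hM : M < 2 * K) {m : ℕ} (hm : m ≠ 0)
    (hmM : m ≤ M) :
    ∑ r ∈ Icc 1 (K - 1), (2 * K - 2 * r).choose m * M.choose (2 * K - 2 * r) =
      M.choose m * ∑ i ∈ range (M - m + 1) with Even (m + i), (M - m).choose i := by
  rw [sum_Icc_two_mul_sub_eq_sum_filter_even (fun e => e.choose m * M.choose e) hM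
      (by simp [Nat.choose_eq_zero_of_lt (Nat.pos_of_ne_zero hm)])
      (fun e he => by simp [Nat.choose_eq_zero_of_lt he]),
    ← sum_range_filter_even_choose_mul_choose hmM]
  exact sum_congr rfl fun e _ => mul_comm _ _

theorem sum_Icc_choose_self_mul_choose_two_mul_sub (hM : M < 2 * K) (hM0 : M ≠ 0)
    (hMeven : Even M) :
    ∑ r ∈ Icc 1 (K - 1), (2 * K - 2 * r).choose M * M.choose (2 * K - 2 * r) = 1 := by
  rw [sum_Icc_choose_mul_choose_two_mul_sub hM hM0 le_rfl, Nat.sub_self, range_one,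
    filter_singleton, if_pos (by simpa using hMeven)]
  simp

theorem sum_Icc_choose_sub_add_one_mul_choose_two_mul_sub (hM : M < 2 * K) {n : ℕ}
    (hn : 2 ≤ n) (hnM : n ≤ M) :
    ∑ r ∈ Icc 1 (K - 1), (2 * K - 2 * r).choose (M - n + 1) * M.choose (2 * K - 2 * r) =
      M.choose (n - 1) * 2 ^ (n - 2) := by
  rw [sum_Icc_choose_mul_choose_two_mul_sub hM (by omega) (by omega),
    show M - (M - n + 1) = n - 1 by omega, sum_range_filter_even_add_choose _ (by omega),
    show M - n + 1 = M - (n - 1) by omega, Nat.choose_symm (by omega), Nat.sub_sub]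

end

theorem PC_diagonal_general (K s : ℕ) (hs : 1 ≤ s) (hsK : s ≤ K - 1) :
    ∑ r ∈ Finset.Icc 1 (K - 1),
        (-(2 / (2 * (s : ℚ) - 1)) *
            ∑ n ∈ Finset.range (2 * K - 2 * s + 1),
              ((2 * K - 2 * r).choose (2 * K - 2 * s - n + 1) : ℚ) *
                ((n + 2 * s - 2).choose n : ℚ) * bernoulli n) *
          ((2 * K - 2 * s).choose (2 * K - 2 * r) : ℚ) =
      1 - (2 / (2 * (s : ℚ) - 1)) *
          ∑ n ∈ Finset.Icc 2 (2 * K - 2 * s),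
            ((2 * K - 2 * s).choose (n - 1) : ℚ) * ((n + 2 * s - 2).choose n : ℚ) *
              2 ^ (n - 2) * bernoulli n := by
  set M := 2 * K - 2 * s
  have hM : M < 2 * K := by omega
  set T : ℕ → ℕ := fun n =>
    ∑ r ∈ Icc 1 (K - 1), (2 * K - 2 * r).choose (M - n + 1) * M.choose (2 * K - 2 * r)
  have hT0 : T 0 = 0 := sum_eq_zero fun r _ => by
    rcases le_or_gt (2 * K - 2 * r) M with h | h
    · simp [Nat.choose_eq_zero_of_lt (Nat.lt_succ_of_le h)]
    · simp [Nat.choose_eq_zero_of_lt h]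
  have hT1 : T 1 = 1 := by
    simp only [T, Nat.sub_add_cancel (by omega : 1 ≤ M)]
    exact sum_Icc_choose_self_mul_choose_two_mul_sub hM (by omega) ⟨K - s, by omega⟩
  have hT2 : ∀ n ∈ Icc 2 M, T n = M.choose (n - 1) * 2 ^ (n - 2) := fun n hn =>
    sum_Icc_choose_sub_add_one_mul_choose_two_mul_sub hM (mem_Icc.mp hn).1 (mem_Icc.mp hn).2
  have hs_ne : (2 * s : ℚ) - 1 ≠ 0 := by
    have : (1 : ℚ) ≤ s := by exact_mod_cast hs
    linarith
  calc _ = -(2 / (2 * (s : ℚ) - 1)) *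
        ∑ n ∈ range (M + 1), ((n + 2 * s - 2).choose n : ℚ) * bernoulli n * T n := by
        simp only [T, mul_sum, sum_mul, Nat.cast_sum, Nat.cast_mul]
        rw [sum_comm]
        exact sum_congr rfl fun n _ => sum_congr rfl fun r _ => by ring
    _ = -(2 / (2 * (s : ℚ) - 1)) *
        (∑ n ∈ range 2, ((n + 2 * s - 2).choose n : ℚ) * bernoulli n * T n +
          ∑ n ∈ Icc 2 M, ((n + 2 * s - 2).choose n : ℚ) * bernoulli n * T n) := by
        rw [← Ico_add_one_right_eq_Icc, sum_range_add_sum_Ico _ (by omega : 2 ≤ M + 1)]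
    _ = -(2 / (2 * (s : ℚ) - 1)) * ((2 * s - 1 : ℕ) * bernoulli 1 +
        ∑ n ∈ Icc 2 M, (M.choose (n - 1) : ℚ) * ((n + 2 * s - 2).choose n : ℚ) *
          2 ^ (n - 2) * bernoulli n) := by
        rw [sum_range_succ, sum_range_succ, sum_range_zero, hT0, hT1,
          show 1 + 2 * s - 2 = 2 * s - 1 by omega, Nat.choose_one_right]
        congr 1
        push_cast
        rw [zero_add, mul_zero, zero_add, mul_one]
        exact congrArg _ (sum_congr rfl fun n hn => by rw [hT2 n hn]; push_cast; ring)
    _ = _ := by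
        rw [bernoulli_one, Nat.cast_sub (by omega)]
        push_cast
        field_simp
        ring

theorem PC_diagonal (K s : ℕ) (hK : 2 ≤ K) (hs : 1 ≤ s) (hsK : s ≤ K - 1) :
    ∑ r ∈ Finset.Icc 1 (K - 1),
        (-(2 / (2 * (s : ℚ) - 1)) *
            ∑ n ∈ Finset.range (2 * K - 2 * s + 1),
              ((2 * K - 2 * r).choose (2 * K - 2 * s - n + 1) : ℚ) *
                ((n + 2 * s - 2).choose n : ℚ) * bernoulli n) *
          ((2 * K - 2 * s).choose (2 * K - 2 * r) : ℚ) =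
      1 - (2 / (2 * (s : ℚ) - 1)) *
          ∑ n ∈ Finset.Icc 2 (2 * K - 2 * s),
            ((2 * K - 2 * s).choose (n - 1) : ℚ) * ((n + 2 * s - 2).choose n : ℚ) *
              2 ^ (n - 2) * bernoulli n :=
  PC_diagonal_general K s hs hsK
end

section
/- Let K ≥ 2 and 1 ≤ s < s' ≤ K-1. Define B_{r,s'} = C(2K-2s', 2r-1), C_{r,s'} = C(2K-2s', 2K-2r), and P_{s,r} as either of the two equal expressions (2/(2s-1)) ∑_{n=0}^{2K-2s} C(2r-1, 2K-2s-n+1) C(n+2s-2,n) B_n = -(2/(2s-1)) ∑_{n=0}^{2K-2s} C(2K-2r, 2K-2s-n+1) C(n+2s-2,n) B_n. Then ∑_{r=1}^{K-1} P_{s,r} (B_{r,s'} + C_{r,s'}) = 0. -/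
/-!
Substitute the first expression for `P_{s,r}` in the `B`-term and the second one in the
`C`-term; with `T j = ∑ₙ C(j, 2K-2s-n+1) C(n+2s-2, n) Bₙ` and `M = 2K-2s'`, the reflection
`r ↦ K - r` turns the sum into the alternating sum `∑_{m=1}^{2K-2} (-1)^(m+1) C(M, m) T m`.
Exchanging the two sums, the orthogonality relation `∑ₘ (-1)^m C(M, m) C(m, k) = (-1)^M δ_{k,M}`
keeps only the index `n = 2(s'-s)+1`, which is odd and greater than `1`, so `Bₙ = 0`.
-/

open Finset

variable {R : Type*} [CommRing R]

open Polynomial in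
theorem sum_range_neg_one_pow_mul_choose_mul_choose {M J : ℕ} (hMJ : M < J) (k : ℕ) :
    ∑ m ∈ range J, (-1 : R) ^ m * M.choose m * m.choose k = if k = M then (-1) ^ M else 0 := by
  -- compare the coefficients of `X ^ k` in `(-X) ^ M = (-(X + 1) + 1) ^ M`
  have hpoly : C ((-1 : R) ^ M) * X ^ M =
      ∑ m ∈ range (M + 1), C ((-1 : R) ^ m * M.choose m) * (X + 1) ^ m := by
    calc C ((-1 : R) ^ M) * X ^ M = (-(X + 1) + 1) ^ M := by
          rw [neg_add_rev, neg_add_cancel_comm, neg_pow (X : R[X]), map_pow, map_neg, map_one]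
      _ = _ := by
          rw [add_pow]
          refine sum_congr rfl fun m _ => ?_
          rw [one_pow, mul_one, neg_pow, map_mul, map_pow, map_neg, map_one, map_natCast]
          ring
  have hcoeff := congrArg (coeff · k) hpoly
  simp only [coeff_C_mul, coeff_X_pow, finsetSum_coeff, coeff_X_add_one_pow] at hcoeff
  rw [← sum_subset (range_subset_range.mpr hMJ), ← hcoeff]
  · split_ifs <;> simp
  · intro m _ hm
    rw [Nat.choose_eq_zero_of_lt (by simpa using hm)]
    simp

theorem sum_range_neg_one_pow_mul_choose_succ_mul_choose_succ {M J k : ℕ} (hMJ : M ≤ J)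
    (hk : k ≠ 0) :
    ∑ m ∈ range J, (-1 : R) ^ m * M.choose (m + 1) * (m + 1).choose k =
      -(if k = M then (-1) ^ M else 0) := by
  rw [← sum_range_neg_one_pow_mul_choose_mul_choose (Nat.lt_succ_of_le hMJ), sum_range_succ',
    Nat.choose_eq_zero_of_lt (Nat.pos_of_ne_zero hk), Nat.cast_zero, mul_zero, add_zero,
    ← sum_neg_distrib]
  refine sum_congr rfl fun m _ => ?_
  ring

theorem sum_range_sub_eq_sum_range_neg_one_pow_mul (g : ℕ → R) (n : ℕ) :
    ∑ r ∈ range n, (g (2 * r + 1) - g (2 * r + 2)) =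
      ∑ m ∈ range (2 * n), (-1) ^ m * g (m + 1) := by
  induction n with
  | zero => simp
  | succ n ih =>
    rw [sum_range_succ, ih, mul_add_one, sum_range_succ, sum_range_succ, pow_succ,
      (even_two_mul n).neg_one_pow]
    ring

theorem sum_Icc_sub_reflect_eq_sum_range_neg_one_pow_mul (g : ℕ → R) (K : ℕ) :
    ∑ r ∈ Icc 1 (K - 1), (g (2 * r - 1) - g (2 * K - 2 * r)) =
      ∑ m ∈ range (2 * K - 2), (-1) ^ m * g (m + 1) := by
  obtain _ | n := K
  · simp
  rw [show 2 * (n + 1) - 2 = 2 * n by omega, ← sum_range_sub_eq_sum_range_neg_one_pow_mul,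
    Nat.add_sub_cancel, ← Ico_add_one_right_eq_Icc, sum_Ico_eq_sum_range, Nat.add_sub_cancel,
    sum_sub_distrib, sum_sub_distrib, ← sum_range_reflect (fun r => g (2 * r + 2))]
  congr 1 <;> refine sum_congr rfl fun r hr => congrArg g ?_ <;> simp at hr <;> omega

/-- `P_{s,r}` is `2 / (2s - 1)` times `bernoulliChooseSum K s (2r - 1)`, and also
`-2 / (2s - 1)` times `bernoulliChooseSum K s (2K - 2r)`. -/
def bernoulliChooseSum (K s j : ℕ) : ℚ :=
  ∑ n ∈ range (2 * K - 2 * s + 1),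
    (j.choose (2 * K - 2 * s - n + 1) : ℚ) * ((n + 2 * s - 2).choose n : ℚ) * bernoulli n

theorem sum_range_neg_one_pow_mul_choose_mul_bernoulliChooseSum {K s s' : ℕ} (hss' : s < s') :
    ∑ m ∈ range (2 * K - 2), (-1) ^ m *
      (((2 * K - 2 * s').choose (m + 1) : ℚ) * bernoulliChooseSum K s (m + 1)) = 0 := by
  have hterm : ∀ n ∈ range (2 * K - 2 * s + 1),
      ∑ m ∈ range (2 * K - 2), (-1 : ℚ) ^ m * ((2 * K - 2 * s').choose (m + 1) : ℚ) *
        ((m + 1).choose (2 * K - 2 * s - n + 1) : ℚ) *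
          (((n + 2 * s - 2).choose n : ℚ) * bernoulli n) = 0 := by
    intro n hn
    rw [mem_range] at hn
    rw [← sum_mul, sum_range_neg_one_pow_mul_choose_succ_mul_choose_succ (by omega) (by omega)]
    split_ifs with hM
    · rw [bernoulli_eq_zero_of_odd (n := n) ⟨s' - s, by omega⟩ (by omega)]
      ring
    · ring
  simp only [bernoulliChooseSum, mul_sum]
  rw [sum_comm]
  refine sum_eq_zero fun n hn => ?_
  rw [← hterm n hn]
  refine sum_congr rfl fun m _ => ?_
  ring

theorem off_diagonal_lt_general (K s s' : ℕ) (hss' : s < s') (P : ℕ → ℚ)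
    (hP1 : ∀ r ∈ Finset.Icc 1 (K - 1),
      P r = (2 / (2 * (s : ℚ) - 1)) *
        ∑ n ∈ Finset.range (2 * K - 2 * s + 1),
          ((2 * r - 1).choose (2 * K - 2 * s - n + 1) : ℚ) *
            ((n + 2 * s - 2).choose n : ℚ) * bernoulli n)
    (hP2 : ∀ r ∈ Finset.Icc 1 (K - 1),
      P r = -(2 / (2 * (s : ℚ) - 1)) *
        ∑ n ∈ Finset.range (2 * K - 2 * s + 1),
          ((2 * K - 2 * r).choose (2 * K - 2 * s - n + 1) : ℚ) *
            ((n + 2 * s - 2).choose n : ℚ) * bernoulli n) :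
    ∑ r ∈ Finset.Icc 1 (K - 1),
        P r * (((2 * K - 2 * s').choose (2 * r - 1) : ℚ) +
          ((2 * K - 2 * s').choose (2 * K - 2 * r) : ℚ)) = 0 := by
  set g : ℕ → ℚ := fun j => ((2 * K - 2 * s').choose j : ℚ) * bernoulliChooseSum K s j
  have hsummand : ∀ r ∈ Icc 1 (K - 1),
      P r * (((2 * K - 2 * s').choose (2 * r - 1) : ℚ) +
          ((2 * K - 2 * s').choose (2 * K - 2 * r) : ℚ)) =
        2 / (2 * (s : ℚ) - 1) * (g (2 * r - 1) - g (2 * K - 2 * r)) := by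
    intro r hr
    rw [mul_add]
    nth_rw 1 [hP1 r hr]
    rw [hP2 r hr]
    simp only [g, bernoulliChooseSum]
    ring
  rw [sum_congr rfl hsummand, ← mul_sum, sum_Icc_sub_reflect_eq_sum_range_neg_one_pow_mul,
    sum_range_neg_one_pow_mul_choose_mul_bernoulliChooseSum hss', mul_zero]

theorem off_diagonal_lt (K s s' : ℕ) (hK : 2 ≤ K) (hs : 1 ≤ s) (hss' : s < s')
    (hs' : s' ≤ K - 1) (P : ℕ → ℚ)
    (hP1 : ∀ r ∈ Finset.Icc 1 (K - 1),
      P r = (2 / (2 * (s : ℚ) - 1)) *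
        ∑ n ∈ Finset.range (2 * K - 2 * s + 1),
          ((2 * r - 1).choose (2 * K - 2 * s - n + 1) : ℚ) *
            ((n + 2 * s - 2).choose n : ℚ) * bernoulli n)
    (hP2 : ∀ r ∈ Finset.Icc 1 (K - 1),
      P r = -(2 / (2 * (s : ℚ) - 1)) *
        ∑ n ∈ Finset.range (2 * K - 2 * s + 1),
          ((2 * K - 2 * r).choose (2 * K - 2 * s - n + 1) : ℚ) *
            ((n + 2 * s - 2).choose n : ℚ) * bernoulli n) :
    ∑ r ∈ Finset.Icc 1 (K - 1),
        P r * (((2 * K - 2 * s').choose (2 * r - 1) : ℚ) +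
          ((2 * K - 2 * s').choose (2 * K - 2 * r) : ℚ)) = 0 :=
  off_diagonal_lt_general K s s' hss' P hP1 hP2
end

section
/- Let f(t) = t/(e^t - 1) and let m be a nonnegative integer. Then e^t · f^(m)(t) = (-1)^m t + (-1)^{m-1} m + ∑_{k=0}^m (-1)^{m-k} C(m,k) f^(k)(t), as an identity for all t with e^t ≠ 1 (equivalently as formal power series after removing the singularity at 0). -/
/-!
Since `(eˣ - 1) f(x) = x`, near any `t` with `eᵗ ≠ 1` we have `f(x) = (x + f(x)) e⁻ˣ`.
Differentiating `m` times by Leibniz' rule, the `k`-th derivative of `x + f(x)` meets the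
`(m - k)`-th derivative `(-1)^(m-k) e⁻ˣ` of the exponential; the summand `x` contributes only for
`k = 0` and `k = 1`, which gives `(-1)^m t + (-1)^(m-1) m`.
-/

open Real Finset Filter Topology

lemma contDiffAt_div_exp_sub_one {n : WithTop ℕ∞} {t : ℝ} (ht : exp t ≠ 1) :
    ContDiffAt ℝ n (fun x : ℝ => x / (exp x - 1)) t :=
  contDiffAt_id.div (contDiff_exp.contDiffAt.sub contDiffAt_const) (sub_ne_zero.2 ht)

lemma div_exp_sub_one_eventuallyEq {t : ℝ} (ht : exp t ≠ 1) :
    (fun x : ℝ => x / (exp x - 1)) =ᶠ[𝓝 t] fun x => (x + x / (exp x - 1)) * exp (-x) := by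
  filter_upwards [(isOpen_ne_fun continuous_exp continuous_const).mem_nhds ht] with x hx
  have hx' : exp x - 1 ≠ 0 := sub_ne_zero.2 hx
  rw [exp_neg]
  field_simp
  ring

lemma iteratedDeriv_mul_exp_neg {g : ℝ → ℝ} {m : ℕ} {t : ℝ} (hg : ContDiffAt ℝ m g t) :
    iteratedDeriv m (fun x => g x * exp (-x)) t =
      exp (-t) * ∑ k ∈ range (m + 1), (-1 : ℝ) ^ (m - k) * m.choose k * iteratedDeriv k g t := by
  have hexp (n : ℕ) : iteratedDeriv n (fun x => exp (-x)) t = (-1) ^ n * exp (-t) := by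
    simpa using congrFun (iteratedDeriv_exp_const_mul n (-1)) t
  rw [iteratedDeriv_fun_mul hg contDiff_neg.exp.contDiffAt, mul_sum]
  simp only [hexp]
  exact sum_congr rfl fun k _ => by ring

lemma sum_neg_one_pow_mul_choose_mul_iteratedDeriv_id (m : ℕ) (t : ℝ) :
    ∑ k ∈ range (m + 1), (-1 : ℝ) ^ (m - k) * m.choose k * iteratedDeriv k (fun x => x) t =
      (-1) ^ m * t + (-1) ^ (m - 1) * m := by
  rcases m with _ | m
  · simp
  · simp [sum_range_succ', iteratedDeriv_fun_id]
    ring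

theorem deriv_relation_f (m : ℕ) (t : ℝ) (ht : Real.exp t ≠ 1) :
    Real.exp t * iteratedDeriv m (fun x : ℝ => x / (Real.exp x - 1)) t =
      (-1 : ℝ) ^ m * t + (-1 : ℝ) ^ (m - 1) * m +
        ∑ k ∈ Finset.range (m + 1),
          (-1 : ℝ) ^ (m - k) * (m.choose k : ℝ) *
            iteratedDeriv k (fun x : ℝ => x / (Real.exp x - 1)) t := by
  have hsplit (k : ℕ) : iteratedDeriv k (fun x => x + x / (exp x - 1)) t =
      iteratedDeriv k (fun x => x) t + iteratedDeriv k (fun x => x / (exp x - 1)) t :=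
    iteratedDeriv_fun_add contDiffAt_id (contDiffAt_div_exp_sub_one ht)
  rw [(div_exp_sub_one_eventuallyEq ht).iteratedDeriv_eq,
    iteratedDeriv_mul_exp_neg (contDiffAt_fun_id.add (contDiffAt_div_exp_sub_one ht)),
    ← mul_assoc, ← exp_add, add_neg_cancel, exp_zero, one_mul]
  simp only [hsplit, mul_add, sum_add_distrib, sum_neg_one_pow_mul_choose_mul_iteratedDeriv_id]
end

section
/- For nonnegative integers m < n with n ≥ 1: ∑_{k=m}^{m+n} (n!/((k-m)!(m+n-k)!)) · B_k = (-1)^m δ_{n,1} + ∑_{k=0}^m (-1)^{m-k} C(m,k) · B_{n+k}, where δ_{n,1} = 1 if n = 1 and 0 otherwise. -/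
/-!
Let `L` be the linear functional on `ℚ[X]` with `L (X ^ k) = B_k`. The recursion
`∑_{j<N} C(N,j) B_j = δ_{N,1}` says `L ((X + 1) ^ N) = B_N + δ_{N,1}`, and the left-hand side
is `L (X ^ m * (X + 1) ^ n)`. Expanding `X ^ m = ((X + 1) - 1) ^ m` binomially turns it into
`∑_k (-1)^(m-k) C(m,k) (B_{n+k} + δ_{n+k,1})`, and for `n ≥ 1` only `k = 0` meets the `δ`.
-/

open Finset

section Umbral

open Polynomial

variable {R : Type*} [CommRing R] (a : ℕ → R)

/-- The umbral functional `X ^ k ↦ a k`. -/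
noncomputable def umbral : R[X] →ₗ[R] R :=
  lsum fun k => LinearMap.id.smulRight (a k)

theorem umbral_C_mul_X_pow (c : R) (k : ℕ) : umbral a (C c * X ^ k) = c * a k := by
  simp [umbral, C_mul_X_pow_eq_monomial]

theorem umbral_X_pow_mul_natCast (k c : ℕ) : umbral a (X ^ k * (c : R[X])) = c * a k := by
  rw [← C_eq_natCast, X_pow_mul_C, umbral_C_mul_X_pow]

theorem umbral_X_add_one_pow (N : ℕ) :
    umbral a ((X + 1) ^ N) = ∑ j ∈ range (N + 1), (N.choose j : R) * a j := by
  simp only [add_pow, one_pow, mul_one, map_sum, umbral_X_pow_mul_natCast]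

theorem umbral_X_pow_mul_X_add_one_pow (m n : ℕ) :
    umbral a (X ^ m * (X + 1) ^ n) = ∑ j ∈ range (n + 1), (n.choose j : R) * a (m + j) := by
  simp only [add_pow, one_pow, mul_one, mul_sum, ← mul_assoc, ← pow_add, map_sum,
    umbral_X_pow_mul_natCast]

theorem X_pow_eq_sum_X_add_one_pow (m : ℕ) :
    (X : R[X]) ^ m = ∑ k ∈ range (m + 1), C ((-1) ^ (m - k) * (m.choose k : R)) * (X + 1) ^ k := by
  rw [← add_neg_cancel_right X (1 : R[X]), add_pow, add_neg_cancel_right]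
  refine sum_congr rfl fun k _ => ?_
  simp only [map_mul, map_pow, map_neg, map_one, map_natCast]
  ring

theorem umbral_X_pow_mul_X_add_one_pow_eq_alternating_sum (m n : ℕ) :
    umbral a (X ^ m * (X + 1) ^ n) =
      ∑ k ∈ range (m + 1), (-1) ^ (m - k) * (m.choose k : R) * umbral a ((X + 1) ^ (n + k)) := by
  rw [X_pow_eq_sum_X_add_one_pow, sum_mul, map_sum]
  refine sum_congr rfl fun k _ => ?_
  rw [mul_assoc, ← pow_add, add_comm k, C_mul', map_smul, smul_eq_mul]

end Umbral

theorem umbral_bernoulli_X_add_one_pow (N : ℕ) :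
    umbral bernoulli ((Polynomial.X + 1) ^ N) = bernoulli N + if N = 1 then 1 else 0 := by
  rw [umbral_X_add_one_pow, sum_range_succ, sum_bernoulli, Nat.choose_self, Nat.cast_one, one_mul,
    add_comm]

open Nat in
theorem sum_Icc_factorial_div_mul_eq_sum_choose_mul {K : Type*} [Field K] [CharZero K]
    (f : ℕ → K) (m n : ℕ) :
    ∑ k ∈ Icc m (m + n), (n ! : K) / ((k - m)! * (m + n - k)!) * f k =
      ∑ j ∈ range (n + 1), (n.choose j : K) * f (m + j) := by
  rw [← Ico_add_one_right_eq_Icc, sum_Ico_eq_sum_range, show m + n + 1 - m = n + 1 by omega]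
  refine sum_congr rfl fun j hj => ?_
  rw [Nat.cast_choose K (by simpa [Nat.lt_succ_iff] using hj), Nat.add_sub_cancel_left,
    Nat.add_sub_add_left]

theorem coeff_comparison_general (m n : ℕ) (hn : 1 ≤ n) :
    ∑ k ∈ Finset.Icc m (m + n),
        ((n.factorial : ℚ) / (((k - m).factorial : ℚ) * ((m + n - k).factorial : ℚ))) *
          bernoulli k =
      (-1 : ℚ) ^ m * (if n = 1 then 1 else 0) +
        ∑ k ∈ Finset.range (m + 1),
          (-1 : ℚ) ^ (m - k) * (m.choose k : ℚ) * bernoulli (n + k) := by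
  have hδ : ∑ k ∈ range (m + 1), (-1 : ℚ) ^ (m - k) * m.choose k * (if n + k = 1 then 1 else 0) =
      (-1) ^ m * if n = 1 then 1 else 0 := by
    rw [sum_range_succ']
    simp [show ∀ k, n + (k + 1) ≠ 1 by omega]
  rw [sum_Icc_factorial_div_mul_eq_sum_choose_mul, ← umbral_X_pow_mul_X_add_one_pow,
    umbral_X_pow_mul_X_add_one_pow_eq_alternating_sum]
  simp only [umbral_bernoulli_X_add_one_pow, mul_add, sum_add_distrib, hδ]
  ring

theorem coeff_comparison (m n : ℕ) (hmn : m < n) (hn : 1 ≤ n) :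
    ∑ k ∈ Finset.Icc m (m + n),
        ((n.factorial : ℚ) / (((k - m).factorial : ℚ) * ((m + n - k).factorial : ℚ))) *
          bernoulli k =
      (-1 : ℚ) ^ m * (if n = 1 then 1 else 0) +
        ∑ k ∈ Finset.range (m + 1),
          (-1 : ℚ) ^ (m - k) * (m.choose k : ℚ) * bernoulli (n + k) :=
  coeff_comparison_general m n hn
end

section
/- Let K ≥ 2 and let 1 ≤ s, s' ≤ K-1 with s > s'. With B_{r,s'} = C(2K-2s', 2r-1) and P_{s,r} = (2/(2s-1)) ∑_{n=0}^{2K-2s} C(2r-1, 2K-2s-n+1) C(n+2s-2, n) B_n, one has (PB)_{s,s'} = (2/(2s-1)) ∑_{n=0}^{2K-2s} C(2K-2s', 2s-2s'+n-1) · C(n+2s-2, n) · 2^{2s-2s'+n-2} · B_n. -/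
/-!
After exchanging the two sums, the coefficient of `B_n` is `∑_r C(2r-1, t) C(m, 2r-1)` with
`t = 2K-2s-n+1` and `m = 2K-2s'`. Choosing a `t`-subset inside a `j`-subset of an `m`-set gives
`C(m,j) C(j,t) = C(m,t) C(m-t, j-t)`, so the coefficient is `C(m,t)` times the sum of the
`C(m-t, k)` with `k + t` odd, which is half of `2^(m-t)` because `m - t = 2s-2s'+n-1 > 0`.
-/

open Finset

theorem Nat.sum_range_choose_filter_odd_add {u : ℕ} (hu : u ≠ 0) (t : ℕ) :
    ∑ k ∈ range (u + 1) with Odd (k + t), u.choose k = 2 ^ (u - 1) := by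
  have htotal : ∑ k ∈ range (u + 1) with Odd (k + t), u.choose k +
      ∑ k ∈ range (u + 1) with ¬Odd (k + t), u.choose k = 2 ^ u := by
    rw [sum_filter_add_sum_filter_not, Nat.sum_range_choose]
  have hodd : ∑ k ∈ range (u + 1) with Odd (k + t), (-1 : ℤ) ^ (k + t) * u.choose k =
      -∑ k ∈ range (u + 1) with Odd (k + t), (u.choose k : ℤ) := by
    rw [← sum_neg_distrib]
    exact sum_congr rfl fun k hk => by rw [(mem_filter.mp hk).2.neg_one_pow, neg_one_mul]
  have heven : ∑ k ∈ range (u + 1) with ¬Odd (k + t), (-1 : ℤ) ^ (k + t) * u.choose k =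
      ∑ k ∈ range (u + 1) with ¬Odd (k + t), (u.choose k : ℤ) :=
    sum_congr rfl fun k hk => by
      rw [(Nat.not_odd_iff_even.mp (mem_filter.mp hk).2).neg_one_pow, one_mul]
  have hbalance : ∑ k ∈ range (u + 1) with Odd (k + t), u.choose k =
      ∑ k ∈ range (u + 1) with ¬Odd (k + t), u.choose k := by
    have hzero : ∑ k ∈ range (u + 1), (-1 : ℤ) ^ (k + t) * u.choose k = 0 := by
      simp_rw [pow_add, mul_right_comm _ ((-1 : ℤ) ^ t), ← sum_mul,
        Int.alternating_sum_range_choose_of_ne hu, zero_mul]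
    rw [← sum_filter_add_sum_filter_not _ (fun k => Odd (k + t)), hodd, heven] at hzero
    exact_mod_cast (neg_add_eq_zero.mp hzero)
  have hpow : 2 ^ u = 2 * 2 ^ (u - 1) := (mul_pow_sub_one hu 2).symm
  omega

theorem Nat.sum_range_filter_odd_choose_mul_choose {t m : ℕ} (htm : t < m) :
    ∑ j ∈ range (m + 1) with Odd j, j.choose t * m.choose j = m.choose t * 2 ^ (m - t - 1) := by
  obtain ⟨u, rfl⟩ : ∃ u, m = t + u := ⟨m - t, by omega⟩
  have hterm : ∀ k, (if Odd (t + k) then (t + k).choose t * (t + u).choose (t + k) else 0) =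
      (t + u).choose t * if Odd (k + t) then u.choose k else 0 := by
    intro k
    rw [mul_ite, mul_zero, add_comm k t, mul_comm, Nat.choose_mul (Nat.le_add_right t k)]
    simp only [add_tsub_cancel_left]
  rw [sum_filter, add_assoc, sum_range_add,
    sum_eq_zero fun j hj => by rw [Nat.choose_eq_zero_of_lt (mem_range.mp hj), zero_mul, ite_self],
    zero_add, sum_congr rfl fun k _ => hterm k, ← mul_sum, ← sum_filter,
    Nat.sum_range_choose_filter_odd_add (by omega), add_tsub_cancel_left]

theorem Finset.sum_Icc_two_mul_sub_one {M : Type*} [AddCommMonoid M] (f : ℕ → M) (R : ℕ) :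
    ∑ r ∈ Icc 1 R, f (2 * r - 1) = ∑ j ∈ range (2 * R) with Odd j, f j := by
  refine sum_nbij' (fun r => 2 * r - 1) (fun j => (j + 1) / 2) ?_ ?_ ?_ ?_ fun _ _ => rfl <;>
    intro a ha <;> simp only [mem_Icc, mem_filter, mem_range, Nat.odd_iff] at * <;> omega

theorem Nat.sum_Icc_choose_mul_choose_two_mul_sub_one {t m R : ℕ} (htm : t < m)
    (hmR : m ≤ 2 * R) :
    ∑ r ∈ Icc 1 R, (2 * r - 1).choose t * m.choose (2 * r - 1) =
      m.choose t * 2 ^ (m - t - 1) := by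
  rw [sum_Icc_two_mul_sub_one (fun j => j.choose t * m.choose j),
    ← Nat.sum_range_filter_odd_choose_mul_choose htm]
  refine (sum_subset (fun j hj => ?_) fun j hj hj' => ?_).symm
  · simp only [mem_filter, mem_range, Nat.odd_iff] at hj ⊢; omega
  · simp only [mem_filter, mem_range, Nat.odd_iff, not_and] at hj hj'
    rw [Nat.choose_eq_zero_of_lt (by omega : m < j), mul_zero]

theorem PB_gt_general (K s s' : ℕ) (hs' : 1 ≤ s') (hss' : s' < s) (hs : s ≤ K - 1) :
    ∑ r ∈ Finset.Icc 1 (K - 1),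
        ((2 / (2 * (s : ℚ) - 1)) *
            ∑ n ∈ Finset.range (2 * K - 2 * s + 1),
              ((2 * r - 1).choose (2 * K - 2 * s - n + 1) : ℚ) *
                ((n + 2 * s - 2).choose n : ℚ) * bernoulli n) *
          ((2 * K - 2 * s').choose (2 * r - 1) : ℚ) =
      (2 / (2 * (s : ℚ) - 1)) *
        ∑ n ∈ Finset.range (2 * K - 2 * s + 1),
          ((2 * K - 2 * s').choose (2 * s - 2 * s' + n - 1) : ℚ) *
            ((n + 2 * s - 2).choose n : ℚ) * 2 ^ (2 * s - 2 * s' + n - 2) * bernoulli n := by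
  simp_rw [mul_assoc, sum_mul, ← mul_sum]
  rw [sum_comm]
  refine congrArg _ (sum_congr rfl fun n hn => ?_)
  have hn := mem_range.mp hn
  have hcoeff := Nat.sum_Icc_choose_mul_choose_two_mul_sub_one (R := K - 1)
    (t := 2 * K - 2 * s - n + 1) (m := 2 * K - 2 * s') (by omega) (by omega)
  rw [Nat.choose_symm_of_eq_add (b := 2 * s - 2 * s' + n - 1) (by omega),
    show 2 * K - 2 * s' - (2 * K - 2 * s - n + 1) - 1 = 2 * s - 2 * s' + n - 2 by omega] at hcoeff
  have hcoeff_cast := congrArg (Nat.cast : ℕ → ℚ) hcoeff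
  push_cast at hcoeff_cast
  simp_rw [mul_right_comm _ (_ * bernoulli n), ← sum_mul]
  linear_combination (((n + 2 * s - 2).choose n : ℚ) * bernoulli n) * hcoeff_cast

theorem PB_gt (K s s' : ℕ) (hK : 2 ≤ K) (hs' : 1 ≤ s') (hss' : s' < s) (hs : s ≤ K - 1) :
    ∑ r ∈ Finset.Icc 1 (K - 1),
        ((2 / (2 * (s : ℚ) - 1)) *
            ∑ n ∈ Finset.range (2 * K - 2 * s + 1),
              ((2 * r - 1).choose (2 * K - 2 * s - n + 1) : ℚ) *
                ((n + 2 * s - 2).choose n : ℚ) * bernoulli n) *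
          ((2 * K - 2 * s').choose (2 * r - 1) : ℚ) =
      (2 / (2 * (s : ℚ) - 1)) *
        ∑ n ∈ Finset.range (2 * K - 2 * s + 1),
          ((2 * K - 2 * s').choose (2 * s - 2 * s' + n - 1) : ℚ) *
            ((n + 2 * s - 2).choose n : ℚ) * 2 ^ (2 * s - 2 * s' + n - 2) * bernoulli n :=
  PB_gt_general K s s' hs' hss' hs
end
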